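/- Let ν_n, ν be probability measures on ℝ^d with characteristic functions φ_n, φ. If φ_n(a) → φ(a) for Lebesgue-almost every a ∈ ℝ^d, then ν_n converges weakly to ν. -/

import Mathlib

/-
Weighting the frequency side by a Gaussian turns a.e. convergence of characteristic functions into
convergence of Gaussian integrals: by Fubini, `∫ e^{-b‖t‖²} φ_μ(t) dt` is a constant multiple of
`∫ e^{-‖x‖²/4b} dμ(x)`, and dominated convergence applies in `t`. Since `1 - e^{-‖x‖²/r²}`
dominates a multiple of the indicator of `{‖x‖ > r}`, the limsup of the tails of `μ n` is bounded
by a Gaussian tail integral of `μ₀`, which vanishes as `r → ∞`; so the sequence is tight. By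
Prokhorov's theorem it remains to identify cluster points: the characteristic function of a
cluster point agrees a.e. with that of `μ₀`, hence everywhere by continuity.
-/

open MeasureTheory Filter Topology Complex
open scoped RealInnerProductSpace ENNReal

section NormedGroup

variable {E : Type*} [NormedAddCommGroup E]

lemma exp_neg_norm_sq_div_le_one (x : E) (r : ℝ) : Real.exp (-‖x‖ ^ 2 / r ^ 2) ≤ 1 :=
  Real.exp_le_one_iff.2 (div_nonpos_of_nonpos_of_nonneg (by simp) (by positivity))

variable [MeasurableSpace E] [BorelSpace E]

lemma measureReal_norm_gt_le_one_sub_integral_exp (μ : Measure E) [IsProbabilityMeasure μ]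
    {r : ℝ} (hr : 0 < r) :
    μ.real {x | r < ‖x‖} ≤
      (1 - Real.exp (-1))⁻¹ * (1 - ∫ x, Real.exp (-‖x‖ ^ 2 / r ^ 2) ∂μ) := by
  have hc : 0 < 1 - Real.exp (-1) := sub_pos.2 (Real.exp_lt_one_iff.2 (by norm_num))
  have hexp : Integrable (fun x ↦ Real.exp (-‖x‖ ^ 2 / r ^ 2)) μ :=
    .of_bound (by fun_prop) 1 (.of_forall fun x ↦ by
      rw [Real.norm_of_nonneg (Real.exp_nonneg _)]; exact exp_neg_norm_sq_div_le_one x r)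
  have hsub : {x : E | r < ‖x‖} ⊆
      {x | 1 - Real.exp (-1) ≤ 1 - Real.exp (-‖x‖ ^ 2 / r ^ 2)} := by
    intro x hx
    simp only [Set.mem_ofPred_eq, sub_le_sub_iff_left, Real.exp_le_exp, neg_div, neg_le_neg_iff]
    rw [one_le_div (by positivity)]
    exact pow_le_pow_left₀ hr.le hx.le 2
  calc μ.real {x | r < ‖x‖}
      ≤ μ.real {x | 1 - Real.exp (-1) ≤ 1 - Real.exp (-‖x‖ ^ 2 / r ^ 2)} :=
        measureReal_mono hsub
    _ ≤ (1 - Real.exp (-1))⁻¹ * ∫ x, 1 - Real.exp (-‖x‖ ^ 2 / r ^ 2) ∂μ := by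
      rw [le_inv_mul_iff₀ hc]
      exact mul_meas_ge_le_integral_of_nonneg
        (.of_forall fun x ↦ sub_nonneg.2 (exp_neg_norm_sq_div_le_one x r))
        ((integrable_const 1).sub hexp) _
    _ = (1 - Real.exp (-1))⁻¹ * (1 - ∫ x, Real.exp (-‖x‖ ^ 2 / r ^ 2) ∂μ) := by
      rw [integral_sub (integrable_const 1) hexp, integral_const, probReal_univ, one_smul]

lemma tendsto_integral_exp_neg_norm_sq_div_atTop (μ : Measure E) [IsProbabilityMeasure μ] :
    Tendsto (fun r : ℝ ↦ ∫ x, Real.exp (-‖x‖ ^ 2 / r ^ 2) ∂μ) atTop (𝓝 1) := by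
  have hle (r : ℝ) (x : E) : ‖Real.exp (-‖x‖ ^ 2 / r ^ 2)‖ ≤ 1 := by
    rw [Real.norm_of_nonneg (Real.exp_nonneg _)]
    exact exp_neg_norm_sq_div_le_one x r
  have hpt (x : E) : Tendsto (fun r : ℝ ↦ Real.exp (-‖x‖ ^ 2 / r ^ 2)) atTop (𝓝 1) := by
    simpa [Function.comp_def] using (Real.continuous_exp.tendsto 0).comp
      (tendsto_const_nhds.div_atTop (tendsto_pow_atTop two_ne_zero))
  simpa using tendsto_integral_filter_of_dominated_convergence (μ := μ) (fun _ ↦ 1)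
    (.of_forall fun r ↦ by fun_prop) (.of_forall fun r ↦ .of_forall (hle r))
    (integrable_const 1) (.of_forall hpt)

end NormedGroup

variable {E : Type*} [NormedAddCommGroup E] [InnerProductSpace ℝ E] [MeasurableSpace E]
  [BorelSpace E]

lemma tendsto_integral_mul_charFun_of_ae_tendsto [SecondCountableTopology E] {ι : Type*}
    {l : Filter ι} [l.IsCountablyGenerated] {μ : ι → Measure E}
    [∀ i, IsProbabilityMeasure (μ i)] {μ₀ : Measure E} {ρ : Measure E} {g : E → ℂ}
    (hg : Integrable g ρ) (h : ∀ᵐ t ∂ρ, Tendsto (fun i ↦ charFun (μ i) t) l (𝓝 (charFun μ₀ t))) :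
    Tendsto (fun i ↦ ∫ t, g t * charFun (μ i) t ∂ρ) l (𝓝 (∫ t, g t * charFun μ₀ t ∂ρ)) := by
  refine tendsto_integral_filter_of_dominated_convergence (fun t ↦ ‖g t‖)
    (.of_forall fun i ↦ hg.aestronglyMeasurable.mul continuous_charFun.aestronglyMeasurable)
    (.of_forall fun i ↦ .of_forall fun t ↦ ?_) hg.norm ?_
  · simpa [norm_mul] using mul_le_of_le_one_right (norm_nonneg _) (norm_charFun_le_one t)
  · filter_upwards [h] with t ht using ht.const_mul (g t)

variable [FiniteDimensional ℝ E]

lemma Measure.ext_of_charFun_ae_eq {μ ν : Measure E} [IsFiniteMeasure μ] [IsFiniteMeasure ν]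
    (h : charFun μ =ᵐ[volume] charFun ν) : μ = ν :=
  Measure.ext_of_charFun <| (continuous_charFun.ae_eq_iff_eq volume continuous_charFun).1 h

lemma integrable_cexp_neg_mul_norm_sq {b : ℝ} (hb : 0 < b) :
    Integrable (fun t : E ↦ cexp (-b * ‖t‖ ^ 2)) := by
  simpa using GaussianFourier.integrable_cexp_neg_mul_sq_norm_add (b := b) (by simpa using hb)
    0 (0 : E)

lemma integral_gaussian_mul_charFun (μ : Measure E) [IsFiniteMeasure μ] {b : ℝ} (hb : 0 < b) :
    ∫ t, cexp (-b * ‖t‖ ^ 2) * charFun μ t =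
      (Real.pi / b) ^ (Module.finrank ℝ E / 2 : ℂ) *
        ↑(∫ x, Real.exp (-‖x‖ ^ 2 / (4 * b)) ∂μ) := by
  have hint : Integrable (Function.uncurry fun t x ↦ cexp (-b * ‖t‖ ^ 2) * cexp (⟪x, t⟫ * I))
      (volume.prod μ) := by
    refine ((integrable_cexp_neg_mul_norm_sq hb).comp_fst μ).norm.mono' (by fun_prop)
      (.of_forall fun ⟨t, x⟩ ↦ ?_)
    rw [Function.uncurry_apply_pair, norm_mul, Complex.norm_exp_ofReal_mul_I, mul_one]
  simp_rw [charFun_apply, ← integral_complex_ofReal, ← integral_const_mul]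
  rw [integral_integral_swap hint]
  refine integral_congr_ae (.of_forall fun x ↦ ?_)
  calc ∫ t, cexp (-b * ‖t‖ ^ 2) * cexp (⟪x, t⟫ * I)
      = ∫ t, cexp (-b * ‖t‖ ^ 2 + I * ⟪x, t⟫) := by
        simp_rw [← Complex.exp_add, mul_comm I]
    _ = (Real.pi / b) ^ (Module.finrank ℝ E / 2 : ℂ) * cexp (I ^ 2 * ‖x‖ ^ 2 / (4 * b)) :=
      GaussianFourier.integral_cexp_neg_mul_sq_norm_add (by simpa using hb) I x
    _ = (Real.pi / b) ^ (Module.finrank ℝ E / 2 : ℂ) * ↑(Real.exp (-‖x‖ ^ 2 / (4 * b))) := by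
      push_cast
      rw [I_sq, neg_one_mul]

lemma tendsto_integral_gaussian_of_ae_tendsto_charFun {ι : Type*} {l : Filter ι}
    [l.IsCountablyGenerated] {μ : ι → Measure E} [∀ i, IsProbabilityMeasure (μ i)]
    {μ₀ : Measure E} [IsFiniteMeasure μ₀]
    (h : ∀ᵐ t, Tendsto (fun i ↦ charFun (μ i) t) l (𝓝 (charFun μ₀ t))) {b : ℝ} (hb : 0 < b) :
    Tendsto (fun i ↦ ∫ x, Real.exp (-‖x‖ ^ 2 / (4 * b)) ∂μ i) l
      (𝓝 (∫ x, Real.exp (-‖x‖ ^ 2 / (4 * b)) ∂μ₀)) := by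
  have hc : (Real.pi / b : ℂ) ^ (Module.finrank ℝ E / 2 : ℂ) ≠ 0 := by
    simp [Real.pi_ne_zero, hb.ne']
  have := (tendsto_integral_mul_charFun_of_ae_tendsto (integrable_cexp_neg_mul_norm_sq hb)
    h).const_mul ((Real.pi / b : ℂ) ^ (Module.finrank ℝ E / 2 : ℂ))⁻¹
  simp_rw [integral_gaussian_mul_charFun _ hb, inv_mul_cancel_left₀ hc] at this
  exact tendsto_ofReal_iff.1 this

lemma isTightMeasureSet_range_of_ae_tendsto_charFun {μ : ℕ → Measure E}
    [∀ n, IsProbabilityMeasure (μ n)] {μ₀ : Measure E} [IsProbabilityMeasure μ₀]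
    (h : ∀ᵐ t, Tendsto (fun n ↦ charFun (μ n) t) atTop (𝓝 (charFun μ₀ t))) :
    IsTightMeasureSet (Set.range μ) := by
  let T (ν : Measure E) (r : ℝ) : ℝ≥0∞ :=
    ENNReal.ofReal ((1 - Real.exp (-1))⁻¹ * (1 - ∫ x, Real.exp (-‖x‖ ^ 2 / r ^ 2) ∂ν))
  have hT : Tendsto (T μ₀) atTop (𝓝 0) := by
    simpa using ENNReal.tendsto_ofReal
      (((tendsto_integral_exp_neg_norm_sq_div_atTop μ₀).const_sub 1).const_mul _)
  refine isTightMeasureSet_range_of_tendsto_limsup_measure_norm_gt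
    (tendsto_of_tendsto_of_tendsto_of_le_of_le' tendsto_const_nhds hT
      (.of_forall fun _ ↦ zero_le) ?_)
  filter_upwards [eventually_gt_atTop 0] with r hr
  have hconv : Tendsto (fun n ↦ T (μ n) r) atTop (𝓝 (T μ₀ r)) := by
    have := tendsto_integral_gaussian_of_ae_tendsto_charFun h (b := r ^ 2 / 4) (by positivity)
    rw [mul_div_cancel₀ _ four_ne_zero] at this
    exact ENNReal.tendsto_ofReal ((this.const_sub 1).const_mul _)
  rw [← hconv.limsup_eq]
  refine limsup_le_limsup (.of_forall fun n ↦ ?_)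
  dsimp only
  rw [← ofReal_measureReal]
  exact ENNReal.ofReal_le_ofReal (measureReal_norm_gt_le_one_sub_integral_exp _ hr)

namespace MeasureTheory.ProbabilityMeasure

lemma tendsto_of_isTightMeasureSet_of_ae_tendsto_charFun {ι : Type*} {l : Filter ι}
    {μ : ι → ProbabilityMeasure E} {μ₀ : ProbabilityMeasure E}
    (h_tight : IsTightMeasureSet {(μ i : Measure E) | i})
    (h : ∀ᵐ t, Tendsto (fun i ↦ charFun (μ i : Measure E) t) l
      (𝓝 (charFun (μ₀ : Measure E) t))) :
    Tendsto μ l (𝓝 μ₀) := by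
  refine (tendsto_iff_ultrafilter _ _ _).2 fun U hU ↦ ?_
  have hcpt := isCompact_closure_of_isTightMeasureSet (S := Set.range μ) (by simpa using h_tight)
  obtain ⟨μ', -, hμ' : Tendsto μ U (𝓝 μ')⟩ := hcpt.ultrafilter_le_nhds (U.map μ)
    (.trans (by simp) (monotone_principal subset_closure))
  suffices μ' = μ₀ by rwa [← this]
  refine toMeasure_injective (Measure.ext_of_charFun_ae_eq ?_).symm
  filter_upwards [h] with t ht
  rw [tendsto_iff_forall_integral_rclike_tendsto ℂ] at hμ'
  refine tendsto_nhds_unique (ht.mono_left hU) ?_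
  simpa [charFun_eq_integral_innerProbChar] using hμ' (BoundedContinuousFunction.innerProbChar t)

theorem tendsto_of_ae_tendsto_charFun {μ : ℕ → ProbabilityMeasure E} {μ₀ : ProbabilityMeasure E}
    (h : ∀ᵐ t, Tendsto (fun n ↦ charFun (μ n : Measure E) t) atTop
      (𝓝 (charFun (μ₀ : Measure E) t))) :
    Tendsto μ atTop (𝓝 μ₀) :=
  tendsto_of_isTightMeasureSet_of_ae_tendsto_charFun
    (by simpa [Set.range] using isTightMeasureSet_range_of_ae_tendsto_charFun h) h

end MeasureTheory.ProbabilityMeasure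

lemma charFun_map_toLp {ι : Type*} [Fintype ι] (ν : Measure (ι → ℝ)) (t : EuclideanSpace ℝ ι) :
    charFun (ν.map (MeasurableEquiv.toLp 2 (ι → ℝ))) t =
      ∫ x, cexp (I * ((∑ i, t i * x i : ℝ) : ℂ)) ∂ν := by
  simp [charFun_apply, integral_map_equiv, PiLp.inner_apply, mul_comm]

/-- Lévy continuity with a.e. convergence: If `ν_n, ν` are probability
measures on `ℝ^d` whose characteristic functions satisfy `φ_n(a) → φ(a)` for
Lebesgue-almost every `a ∈ ℝ^d`, then `ν_n ⇒ ν` weakly. -/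
theorem stmt_15
    (d : ℕ) (ν : ℕ → Measure (Fin d → ℝ)) (νlim : Measure (Fin d → ℝ))
    [∀ n, IsProbabilityMeasure (ν n)] [IsProbabilityMeasure νlim]
    (h : ∀ᵐ a : Fin d → ℝ, Tendsto
      (fun n => ∫ x, Complex.exp (Complex.I * ((∑ i, a i * x i : ℝ) : ℂ)) ∂(ν n))
      atTop
      (𝓝 (∫ x, Complex.exp (Complex.I * ((∑ i, a i * x i : ℝ) : ℂ)) ∂νlim))) :
    ∀ f : BoundedContinuousFunction (Fin d → ℝ) ℝ,
      Tendsto (fun n => ∫ x, f x ∂(ν n)) atTop (𝓝 (∫ x, f x ∂νlim)) := by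
  let e := MeasurableEquiv.toLp 2 (Fin d → ℝ)
  let P (μ : Measure (Fin d → ℝ)) [IsProbabilityMeasure μ] :
      ProbabilityMeasure (EuclideanSpace ℝ (Fin d)) :=
    ⟨μ.map e, Measure.isProbabilityMeasure_map e.measurable.aemeasurable⟩
  have hP : Tendsto (fun n ↦ P (ν n)) atTop (𝓝 (P νlim)) := by
    refine ProbabilityMeasure.tendsto_of_ae_tendsto_charFun ?_
    filter_upwards [(PiLp.volume_preserving_ofLp (Fin d)).quasiMeasurePreserving.ae h] with t ht
    simpa only [P, e, ProbabilityMeasure.coe_mk, charFun_map_toLp] using ht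
  intro f
  rw [ProbabilityMeasure.tendsto_iff_forall_integral_tendsto] at hP
  simpa [P, e, integral_map_equiv] using
    hP (f.compContinuous ⟨WithLp.ofLp, PiLp.continuous_ofLp 2 _⟩)
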